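/- For n ≡ 1 or 2 (mod 4), two elements α, β of AM_n of rank n-1 are J-related in AM_n if and only if d(α) and d(β) have the same parity. -/

import Mathlib

/-- Partial transformations on `Fin n`, represented as `Option`-valued maps. -/
abbrev PT (n : ℕ) := Fin n → Option (Fin n)

/-- Left-to-right composition of partial maps: `x (pcomp f g) = (x f) g`. -/
def pcomp {n : ℕ} (f g : PT n) : PT n := fun x => (f x).bind g

/-- The identity partial map. -/
def pid (n : ℕ) : PT n := fun x => some x

instance PTMonoid (n : ℕ) : Monoid (PT n) where
  mul := pcomp
  one := pid n
  mul_assoc f g h := funext fun x => by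
    show ((f x).bind g).bind h = (f x).bind fun y => (g y).bind h
    cases f x <;> rfl
  one_mul f := rfl
  mul_one f := funext fun x => by
    show (f x).bind (fun y => some y) = f x
    cases f x <;> rfl

/-- `f` is injective on its domain. -/
def pInj {n : ℕ} (f : PT n) : Prop := ∀ x y a, f x = some a → f y = some a → x = y

/-- The domain of a partial map. -/
def pDom {n : ℕ} (f : PT n) : Finset (Fin n) := Finset.univ.filter fun x => (f x).isSome

/-- The image of a partial map. -/
def pIm {n : ℕ} (f : PT n) : Finset (Fin n) := Finset.univ.filter fun b => ∃ x, f x = some b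

/-- The rank of a partial map is the size of its domain. -/
def prank {n : ℕ} (f : PT n) : ℕ := (pDom f).card

/-- Order-preserving partial maps. -/
def orderPres {n : ℕ} (f : PT n) : Prop :=
  ∀ x y a b, f x = some a → f y = some b → x ≤ y → a ≤ b

/-- Order-reversing partial maps. -/
def orderRev {n : ℕ} (f : PT n) : Prop :=
  ∀ x y a b, f x = some a → f y = some b → x ≤ y → b ≤ a

/-- Monotone partial maps. -/
def isMonotonePT {n : ℕ} (f : PT n) : Prop := orderPres f ∨ orderRev f

/-- The permutation `σ` extends the partial map `f`. -/
def extendsTo {n : ℕ} (σ : Equiv.Perm (Fin n)) (f : PT n) : Prop :=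
  ∀ x a, f x = some a → σ x = a

/-- Membership in the alternating inverse monoid `AI_n`: an injective partial map of
rank `≤ n - 2`, or one that extends to an even permutation. -/
def inAI {n : ℕ} (f : PT n) : Prop :=
  pInj f ∧ (prank f + 2 ≤ n ∨
    ∃ σ : Equiv.Perm (Fin n), σ ∈ alternatingGroup (Fin n) ∧ extendsTo σ f)

/-- `AO_n = AI_n ∩ POI_n`. -/
def AO (n : ℕ) : Set (PT n) := {f | orderPres f ∧ inAI f}

/-- `AM_n = AI_n ∩ PMI_n`. -/
def AM (n : ℕ) : Set (PT n) := {f | isMonotonePT f ∧ inAI f}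

/-- Green's `J`-relation relative to a submonoid-like subset `S` (containing the identity):
`a J b` iff each lies in the two-sided principal ideal of the other. -/
def JRelIn {n : ℕ} (S : Set (PT n)) (a b : PT n) : Prop :=
  (∃ u v, u ∈ S ∧ v ∈ S ∧ a = u * b * v) ∧ (∃ u v, u ∈ S ∧ v ∈ S ∧ b = u * a * v)

/-!
A rank-`(n - 1)` element `u` of `AM_n` with `pDom u = {d}ᶜ` is the restriction of an even
permutation `σ` that is monotone on `{d}ᶜ`. If `σ` is increasing there, it is the cycle sliding `d`
to `σ d`, of sign `(-1)^(d + σ d)`; if it is decreasing, its composite with the reversal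
`i ↦ n - 1 - i` is such a cycle, and for `n ≡ 1, 2 (mod 4)` the sign `(-1)^⌊n/2⌋` of the reversal
again forces `d ≡ σ d (mod 2)`. If `a = u b v`, then `u` maps `{d_a}ᶜ` into `{d_b}ᶜ`, so
`σ d_a = d_b`. Conversely, if `d_a ≡ d_b`, the restriction `g` of the sliding cycle lies in `AM_n`,
and since `AM_n` is an inverse monoid, `a = g b ((g b)⁻¹ a)`.
-/

open Finset Equiv Equiv.Perm

section PartialMaps

variable {n : ℕ} {f g : PT n}

theorem mem_pDom {x : Fin n} : x ∈ pDom f ↔ ∃ y, f x = some y := by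
  simp [pDom, Option.isSome_iff_exists]

theorem notMem_pDom {x : Fin n} : x ∉ pDom f ↔ f x = none := by
  simp [pDom]

theorem mem_pIm {y : Fin n} : y ∈ pIm f ↔ ∃ x, f x = some y := by
  simp [pIm]

theorem mul_apply_eq_some {x z : Fin n} : (f * g) x = some z ↔ ∃ y, f x = some y ∧ g y = some z :=
  Option.bind_eq_some_iff

theorem card_pIm_le_prank (f : PT n) : (pIm f).card ≤ prank f := by
  refine card_le_card_of_surjOn (fun x => (f x).getD x) fun y hy => ?_
  obtain ⟨x, hx⟩ := mem_pIm.1 hy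
  exact ⟨x, mem_pDom.2 ⟨y, hx⟩, by simp [hx]⟩

theorem pDom_mul_subset (f g : PT n) : pDom (f * g) ⊆ pDom f := fun x hx => by
  obtain ⟨z, hz⟩ := mem_pDom.1 hx
  obtain ⟨y, hy, -⟩ := mul_apply_eq_some.1 hz
  exact mem_pDom.2 ⟨y, hy⟩

theorem pDom_subset_pDom_mul (h : pIm f ⊆ pDom g) : pDom f ⊆ pDom (f * g) := fun x hx => by
  obtain ⟨y, hy⟩ := mem_pDom.1 hx
  obtain ⟨z, hz⟩ := mem_pDom.1 (h (mem_pIm.2 ⟨x, hy⟩))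
  exact mem_pDom.2 ⟨z, mul_apply_eq_some.2 ⟨y, hy, hz⟩⟩

theorem pInj.mul (hf : pInj f) (hg : pInj g) : pInj (f * g) := fun x x' z hx hx' => by
  obtain ⟨y, hfx, hgy⟩ := mul_apply_eq_some.1 hx
  obtain ⟨y', hfx', hgy'⟩ := mul_apply_eq_some.1 hx'
  obtain rfl := hg y y' z hgy hgy'
  exact hf x x' y hfx hfx'

theorem orderPres.mul (hf : orderPres f) (hg : orderPres g) : orderPres (f * g) := by
  intro x x' z z' hx hx' hle
  obtain ⟨y, hfx, hgy⟩ := mul_apply_eq_some.1 hx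
  obtain ⟨y', hfx', hgy'⟩ := mul_apply_eq_some.1 hx'
  exact hg y y' z z' hgy hgy' (hf x x' y y' hfx hfx' hle)

theorem orderPres.mul_orderRev (hf : orderPres f) (hg : orderRev g) : orderRev (f * g) := by
  intro x x' z z' hx hx' hle
  obtain ⟨y, hfx, hgy⟩ := mul_apply_eq_some.1 hx
  obtain ⟨y', hfx', hgy'⟩ := mul_apply_eq_some.1 hx'
  exact hg y y' z z' hgy hgy' (hf x x' y y' hfx hfx' hle)

theorem orderRev.mul_orderPres (hf : orderRev f) (hg : orderPres g) : orderRev (f * g) := by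
  intro x x' z z' hx hx' hle
  obtain ⟨y, hfx, hgy⟩ := mul_apply_eq_some.1 hx
  obtain ⟨y', hfx', hgy'⟩ := mul_apply_eq_some.1 hx'
  exact hg y' y z' z hgy' hgy (hf x x' y y' hfx hfx' hle)

theorem orderRev.mul (hf : orderRev f) (hg : orderRev g) : orderPres (f * g) := by
  intro x x' z z' hx hx' hle
  obtain ⟨y, hfx, hgy⟩ := mul_apply_eq_some.1 hx
  obtain ⟨y', hfx', hgy'⟩ := mul_apply_eq_some.1 hx'
  exact hg y' y z' z hgy' hgy (hf x x' y y' hfx hfx' hle)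

theorem isMonotonePT.mul (hf : isMonotonePT f) (hg : isMonotonePT g) : isMonotonePT (f * g) := by
  rcases hf with hf | hf <;> rcases hg with hg | hg
  · exact .inl (hf.mul hg)
  · exact .inr (hf.mul_orderRev hg)
  · exact .inr (hf.mul_orderPres hg)
  · exact .inl (hf.mul hg)

theorem extendsTo.mul {σ τ : Perm (Fin n)} (hf : extendsTo σ f) (hg : extendsTo τ g) :
    extendsTo (τ * σ) (f * g) := fun x z hx => by
  obtain ⟨y, hfx, hgy⟩ := mul_apply_eq_some.1 hx
  rw [Perm.mul_apply, hf x y hfx, hg y z hgy]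

theorem inAI.mul (hf : inAI f) (hg : inAI g) : inAI (f * g) := by
  refine ⟨hf.1.mul hg.1, ?_⟩
  rcases hf.2 with hrf | ⟨σ, hσ, hσf⟩
  · exact .inl (le_trans (by gcongr; exact card_le_card (pDom_mul_subset f g)) hrf)
  rcases hg.2 with hrg | ⟨τ, hτ, hτg⟩
  · refine .inl (le_trans (Nat.add_le_add_right ?_ 2) hrg)
    refine card_le_card_of_injOn σ (fun x hx => ?_) σ.injective.injOn
    obtain ⟨z, hz⟩ := mem_pDom.1 (mem_coe.1 hx)
    obtain ⟨y, hfx, hgy⟩ := mul_apply_eq_some.1 hz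
    rw [mem_coe, hσf x y hfx]
    exact mem_pDom.2 ⟨z, hgy⟩
  · exact .inr ⟨τ * σ, mul_mem hτ hσ, hσf.mul hτg⟩

theorem mul_mem_AM (hf : f ∈ AM n) (hg : g ∈ AM n) : f * g ∈ AM n :=
  ⟨hf.1.mul hg.1, hf.2.mul hg.2⟩

end PartialMaps

section Inverse

variable {n : ℕ} {f a : PT n}

def pinv (f : PT n) : PT n := fun y =>
  if h : ∃ x, f x = some y then some (Fin.find _ h) else none

theorem apply_eq_some_of_pinv_eq_some {x y : Fin n} (h : pinv f y = some x) : f x = some y := by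
  unfold pinv at h
  split_ifs at h with hy
  exact Option.some.inj h ▸ Fin.find_spec hy

theorem pinv_eq_some_iff (hf : pInj f) {x y : Fin n} : pinv f y = some x ↔ f x = some y := by
  refine ⟨apply_eq_some_of_pinv_eq_some, fun hx => ?_⟩
  have hy : ∃ x, f x = some y := ⟨x, hx⟩
  rw [pinv, dif_pos hy, hf _ _ _ (Fin.find_spec hy) hx]

theorem pDom_pinv (f : PT n) : pDom (pinv f) = pIm f := by
  ext y
  rw [mem_pDom, mem_pIm]
  refine ⟨fun ⟨x, hx⟩ => ⟨x, apply_eq_some_of_pinv_eq_some hx⟩, fun hy => ?_⟩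
  exact ⟨_, dif_pos hy⟩

theorem pInj_pinv (f : PT n) : pInj (pinv f) := fun _ _ _ hy hy' =>
  Option.some.inj ((apply_eq_some_of_pinv_eq_some hy).symm.trans
    (apply_eq_some_of_pinv_eq_some hy'))

theorem orderPres.pinv (hf : orderPres f) : orderPres (pinv f) := fun y y' x x' hy hy' hle => by
  refine le_of_not_gt fun hlt => hlt.ne' ?_
  have hyy' : y = y' := le_antisymm hle (hf x' x y' y (apply_eq_some_of_pinv_eq_some hy')
    (apply_eq_some_of_pinv_eq_some hy) hlt.le)
  exact Option.some.inj (hy.symm.trans (hyy' ▸ hy'))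

theorem orderRev.pinv (hf : orderRev f) : orderRev (pinv f) := fun y y' x x' hy hy' hle => by
  refine le_of_not_gt fun hlt => hlt.ne ?_
  have hyy' : y = y' := le_antisymm hle (hf x x' y y' (apply_eq_some_of_pinv_eq_some hy)
    (apply_eq_some_of_pinv_eq_some hy') hlt.le)
  exact Option.some.inj (hy.symm.trans (hyy' ▸ hy'))

theorem extendsTo.pinv {σ : Perm (Fin n)} (hf : extendsTo σ f) : extendsTo σ⁻¹ (pinv f) :=
  fun y x hy => Perm.inv_eq_iff_eq.2 (hf x y (apply_eq_some_of_pinv_eq_some hy)).symm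

theorem inAI.pinv (hf : inAI f) : inAI (pinv f) := by
  refine ⟨pInj_pinv f, ?_⟩
  rcases hf.2 with hr | ⟨σ, hσ, hσf⟩
  · refine .inl (le_trans ?_ hr)
    rw [prank, pDom_pinv]
    exact Nat.add_le_add_right (card_pIm_le_prank f) 2
  · exact .inr ⟨σ⁻¹, inv_mem hσ, hσf.pinv⟩

theorem pinv_mem_AM (hf : f ∈ AM n) : pinv f ∈ AM n :=
  ⟨hf.1.imp orderPres.pinv orderRev.pinv, hf.2.pinv⟩

theorem mul_pinv_mul_of_pDom_subset (hf : pInj f) (h : pDom a ⊆ pDom f) : f * pinv f * a = a := by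
  funext x
  change ((f x).bind (pinv f)).bind a = a x
  by_cases hx : x ∈ pDom f
  · obtain ⟨y, hy⟩ := mem_pDom.1 hx
    rw [hy, Option.bind_some, (pinv_eq_some_iff hf).2 hy, Option.bind_some]
  · rw [notMem_pDom.1 hx, notMem_pDom.1 fun hxa => hx (h hxa)]
    rfl

end Inverse

theorem Int.units_neg_one_pow_eq_neg_one_pow_iff {a b : ℕ} :
    ((-1 : ℤˣ) ^ a = (-1) ^ b) ↔ a % 2 = b % 2 := by
  rw [Int.units_pow_eq_pow_mod_two, Int.units_pow_eq_pow_mod_two _ b]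
  refine ⟨fun h => ?_, fun h => by rw [h]⟩
  rcases Nat.mod_two_eq_zero_or_one a with ha | ha <;>
    rcases Nat.mod_two_eq_zero_or_one b with hb | hb <;> simp_all

theorem Fin.sign_revPerm (n : ℕ) : sign (Fin.revPerm : Perm (Fin n)) = (-1) ^ (n / 2) := by
  induction n with
  | zero => rfl
  | succ m ih =>
    -- rotating the reversal of `Fin (m + 1)` by one step fixes `0` and reverses the rest
    have hrot : finRotate (m + 1) * Fin.revPerm = decomposeFin.symm (0, Fin.revPerm) := by
      ext x
      refine Fin.cases ?_ (fun j => ?_) x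
      · simp [Fin.rev_zero]
      · simp [Fin.rev_succ]
    have hsign := congrArg sign hrot
    rw [Perm.sign_mul, sign_finRotate, decomposeFin.symm_sign, if_pos rfl, one_mul, ih,
      Nat.succ_sub_one] at hsign
    calc sign Fin.revPerm = (-1) ^ m * ((-1) ^ m * sign Fin.revPerm) := by
          rw [← mul_assoc, Int.units_mul_self, one_mul]
      _ = (-1) ^ ((m + 1) / 2) := by
          rw [hsign, ← pow_add, Int.units_neg_one_pow_eq_neg_one_pow_iff]
          rcases Nat.even_or_odd' m with ⟨k, rfl | rfl⟩ <;> omega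

section Slide

variable {m : ℕ}

def slidePerm (d i : Fin (m + 1)) : Perm (Fin (m + 1)) := i.cycleRange⁻¹ * d.cycleRange

theorem slidePerm_apply_self (d i : Fin (m + 1)) : slidePerm d i d = i := by
  simp [slidePerm, Fin.cycleRange_self, Fin.cycleRange_symm_zero]

theorem slidePerm_comp_succAbove (d i : Fin (m + 1)) :
    slidePerm d i ∘ d.succAbove = i.succAbove := by
  funext j
  simp [slidePerm, Fin.cycleRange_succAbove, Fin.cycleRange_symm_succ]

theorem sign_slidePerm (d i : Fin (m + 1)) : sign (slidePerm d i) = (-1) ^ (d.val + i.val) := by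
  rw [slidePerm, Perm.sign_mul, sign_inv, Fin.sign_cycleRange, Fin.sign_cycleRange, ← pow_add,
    add_comm]

theorem eq_slidePerm_of_strictMono {σ : Perm (Fin (m + 1))} {d : Fin (m + 1)}
    (hσ : StrictMono (σ ∘ d.succAbove)) : σ = slidePerm d (σ d) := by
  have hcomp : σ ∘ d.succAbove = (σ d).succAbove := by
    refine (hσ.range_inj (Fin.strictMono_succAbove _)).1 ?_
    rw [Set.range_comp, Fin.range_succAbove, Fin.range_succAbove, Set.image_compl_eq σ.bijective,
      Set.image_singleton]
  ext x
  rcases Fin.eq_self_or_eq_succAbove d x with rfl | ⟨j, rfl⟩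
  · rw [slidePerm_apply_self]
  · rw [← Function.comp_apply (f := slidePerm _ _), slidePerm_comp_succAbove, ← hcomp]
    rfl

theorem val_mod_two_eq_of_strictMono {σ : Perm (Fin (m + 1))} (hσ : σ ∈ alternatingGroup _)
    {d : Fin (m + 1)} (hmono : StrictMono (σ ∘ d.succAbove)) : d.val % 2 = (σ d).val % 2 := by
  rw [mem_alternatingGroup, eq_slidePerm_of_strictMono hmono, sign_slidePerm,
    neg_one_pow_eq_one_iff_even (by decide), Nat.even_iff] at hσ
  omega

theorem val_mod_two_eq_of_strictAnti (hm : (m + 1) % 4 = 1 ∨ (m + 1) % 4 = 2)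
    {σ : Perm (Fin (m + 1))} (hσ : σ ∈ alternatingGroup _) {d : Fin (m + 1)}
    (hanti : StrictAnti (σ ∘ d.succAbove)) : d.val % 2 = (σ d).val % 2 := by
  set τ : Perm (Fin (m + 1)) := Fin.revPerm * σ with hτ
  have hmono : StrictMono (τ ∘ d.succAbove) := fun _ _ hjk => Fin.rev_lt_rev.2 (hanti hjk)
  have hsign := sign_slidePerm d (τ d)
  rw [← eq_slidePerm_of_strictMono hmono, hτ, Perm.sign_mul, mem_alternatingGroup.1 hσ, mul_one,
    Fin.sign_revPerm, Int.units_neg_one_pow_eq_neg_one_pow_iff, Perm.mul_apply, Fin.revPerm_apply,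
    Fin.val_rev] at hsign
  have := (σ d).isLt
  omega

end Slide

section Punctured

variable {n : ℕ}

def punctured (σ : Perm (Fin n)) (d : Fin n) : PT n := fun x => if x = d then none else some (σ x)

theorem punctured_eq_some {σ : Perm (Fin n)} {d x y : Fin n} :
    punctured σ d x = some y ↔ x ≠ d ∧ σ x = y := by
  unfold punctured
  split_ifs with h <;> simp [h]

theorem pInj_punctured (σ : Perm (Fin n)) (d : Fin n) : pInj (punctured σ d) :=
  fun _ _ _ hx hx' =>
    σ.injective ((punctured_eq_some.1 hx).2.trans (punctured_eq_some.1 hx').2.symm)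

theorem extendsTo_punctured (σ : Perm (Fin n)) (d : Fin n) : extendsTo σ (punctured σ d) :=
  fun _ _ hx => (punctured_eq_some.1 hx).2

theorem pDom_punctured (σ : Perm (Fin n)) (d : Fin n) : pDom (punctured σ d) = univ.erase d := by
  ext x
  simp [mem_pDom, punctured_eq_some]

theorem pIm_punctured (σ : Perm (Fin n)) (d : Fin n) : pIm (punctured σ d) = univ.erase (σ d) := by
  ext y
  simp only [mem_pIm, punctured_eq_some, mem_erase, mem_univ, and_true]
  exact ⟨fun ⟨x, hxd, hxy⟩ => hxy ▸ σ.injective.ne hxd,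
    fun hy => ⟨σ⁻¹ y, fun h => hy (Perm.inv_eq_iff_eq.1 h), σ.apply_symm_apply y⟩⟩

theorem orderPres_punctured {m : ℕ} {σ : Perm (Fin (m + 1))} {d : Fin (m + 1)}
    (hσ : Monotone (σ ∘ d.succAbove)) : orderPres (punctured σ d) := fun x x' y y' hx hx' hle => by
  obtain ⟨hxd, rfl⟩ := punctured_eq_some.1 hx
  obtain ⟨hxd', rfl⟩ := punctured_eq_some.1 hx'
  obtain ⟨j, rfl⟩ := Fin.exists_succAbove_eq hxd
  obtain ⟨j', rfl⟩ := Fin.exists_succAbove_eq hxd'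
  exact hσ (Fin.succAbove_le_succAbove_iff.1 hle)

theorem punctured_mem_AM {m : ℕ} {σ : Perm (Fin (m + 1))} (hσ : σ ∈ alternatingGroup _)
    {d : Fin (m + 1)} (hmono : Monotone (σ ∘ d.succAbove)) : punctured σ d ∈ AM (m + 1) :=
  ⟨.inl (orderPres_punctured hmono), pInj_punctured σ d, .inr ⟨σ, hσ, extendsTo_punctured σ d⟩⟩

end Punctured

section CorankOne

variable {m : ℕ} {a b u v : PT (m + 1)} {da db : Fin (m + 1)}

theorem val_mod_two_eq_of_mem_AM (hm : (m + 1) % 4 = 1 ∨ (m + 1) % 4 = 2) (hu : u ∈ AM (m + 1))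
    {d e : Fin (m + 1)} (hmaps : ∀ j, ∃ y, u (d.succAbove j) = some y ∧ y ≠ e) :
    d.val % 2 = e.val % 2 := by
  have hdom : univ.erase d ⊆ pDom u := fun x hx => by
    obtain ⟨j, rfl⟩ := Fin.exists_succAbove_eq (mem_erase.1 hx).1
    obtain ⟨y, hy, -⟩ := hmaps j
    exact mem_pDom.2 ⟨y, hy⟩
  obtain ⟨σ, hσ, hσu⟩ : ∃ σ ∈ alternatingGroup (Fin (m + 1)), extendsTo σ u := by
    refine hu.2.2.resolve_left fun hrank => ?_
    have := card_le_card hdom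
    rw [card_erase_of_mem (mem_univ d), card_univ, Fintype.card_fin] at this
    unfold prank at hrank
    omega
  have happ : ∀ j, u (d.succAbove j) = some (σ (d.succAbove j)) := fun j => by
    obtain ⟨y, hy, -⟩ := hmaps j
    rw [hy, hσu _ _ hy]
  have hσd : σ d = e := by
    by_contra hne
    obtain ⟨j, hj⟩ := Fin.exists_succAbove_eq (x := σ⁻¹ e) (y := d)
      fun h => hne (Perm.inv_eq_iff_eq.1 h).symm
    obtain ⟨y, hy, hye⟩ := hmaps j
    rw [hj] at hy
    exact hye ((hσu _ _ hy).symm.trans (σ.apply_symm_apply e))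
  rw [← hσd]
  have hinj : Function.Injective (σ ∘ d.succAbove) :=
    σ.injective.comp Fin.succAbove_right_injective
  rcases hu.1 with hp | hr
  · refine val_mod_two_eq_of_strictMono hσ (Monotone.strictMono_of_injective ?_ hinj)
    exact fun j k hjk => hp _ _ _ _ (happ j) (happ k) (Fin.succAbove_le_succAbove_iff.2 hjk)
  · refine val_mod_two_eq_of_strictAnti hm hσ (Antitone.strictAnti_of_injective ?_ hinj)
    exact fun j k hjk => hr _ _ _ _ (happ j) (happ k) (Fin.succAbove_le_succAbove_iff.2 hjk)

theorem val_mod_two_eq_of_eq_mul_mul (hm : (m + 1) % 4 = 1 ∨ (m + 1) % 4 = 2)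
    (hda : pDom a = univ.erase da) (hdb : pDom b = univ.erase db) (hu : u ∈ AM (m + 1))
    (hab : a = u * b * v) : da.val % 2 = db.val % 2 := by
  refine val_mod_two_eq_of_mem_AM hm hu fun j => ?_
  have hx : da.succAbove j ∈ pDom a := hda ▸ mem_erase.2 ⟨Fin.succAbove_ne da j, mem_univ _⟩
  obtain ⟨w, hw⟩ := mem_pDom.1 hx
  rw [hab] at hw
  obtain ⟨z, hz, -⟩ := mul_apply_eq_some.1 hw
  obtain ⟨y, hy, hby⟩ := mul_apply_eq_some.1 hz
  have hyb : y ∈ univ.erase db := hdb ▸ mem_pDom.2 ⟨z, hby⟩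
  exact ⟨y, hy, (mem_erase.1 hyb).1⟩

theorem exists_eq_mul_mul_of_val_mod_two_eq (ha : a ∈ AM (m + 1)) (hb : b ∈ AM (m + 1))
    (hda : pDom a = univ.erase da) (hdb : pDom b = univ.erase db)
    (hpar : da.val % 2 = db.val % 2) :
    ∃ u v, u ∈ AM (m + 1) ∧ v ∈ AM (m + 1) ∧ a = u * b * v := by
  set g := punctured (slidePerm da db) da
  have hg : g ∈ AM (m + 1) := by
    refine punctured_mem_AM ?_ ?_
    · rw [mem_alternatingGroup, sign_slidePerm, neg_one_pow_eq_one_iff_even (by decide),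
        Nat.even_iff]
      omega
    · rw [slidePerm_comp_succAbove]
      exact (Fin.strictMono_succAbove _).monotone
  have hgb : pIm g ⊆ pDom b := by rw [pIm_punctured, slidePerm_apply_self, hdb]
  refine ⟨g, pinv (g * b) * a, hg, mul_mem_AM (pinv_mem_AM (mul_mem_AM hg hb)) ha, ?_⟩
  rw [← mul_assoc, mul_pinv_mul_of_pDom_subset (hg.2.1.mul hb.2.1)]
  rw [hda, ← pDom_punctured (slidePerm da db)]
  exact pDom_subset_pDom_mul hgb

end CorankOne

theorem stmt11_general {n : ℕ} (h4 : n % 4 = 1 ∨ n % 4 = 2)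
    (a b : PT n) (ha : a ∈ AM n) (hb : b ∈ AM n)
    (da db : Fin n) (hda : pDom a = Finset.univ.erase da) (hdb : pDom b = Finset.univ.erase db) :
    JRelIn (AM n) a b ↔ da.val % 2 = db.val % 2 := by
  cases n with
  | zero => exact da.elim0
  | succ m =>
    refine ⟨fun ⟨⟨_, _, hu, _, hab⟩, _⟩ => val_mod_two_eq_of_eq_mul_mul h4 hda hdb hu hab,
      fun hpar => ⟨?_, ?_⟩⟩
    · exact exists_eq_mul_mul_of_val_mod_two_eq ha hb hda hdb hpar
    · exact exists_eq_mul_mul_of_val_mod_two_eq hb ha hdb hda hpar.symm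

/-- for `n ≡ 1, 2 (mod 4)`, rank-`n-1` elements of `AM_n` are `J`-related
iff the missing domain elements have the same parity. -/
theorem stmt11 {n : ℕ} (hn : 2 ≤ n) (h4 : n % 4 = 1 ∨ n % 4 = 2)
    (a b : PT n) (ha : a ∈ AM n) (hb : b ∈ AM n)
    (da db : Fin n) (hda : pDom a = Finset.univ.erase da) (hdb : pDom b = Finset.univ.erase db) :
    JRelIn (AM n) a b ↔ da.val % 2 = db.val % 2 :=
  stmt11_general h4 a b ha hb da db hda hdb
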